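/- Let y ∈ {-1,1}, μ ∈ ℝ, σ > 0, and define z = yμ/√(1+σ²) and η = Φ(z). Then the first moment of the tilted density p(x) = η⁻¹ Φ(y x) φ(x; μ, σ²) equals μ̂ = μ + y σ² φ(z) / (η √(1+σ²)). -/

import Mathlib

open MeasureTheory Real Set Filter

noncomputable def stdPdf (x : ℝ) : ℝ :=
  (Real.sqrt (2 * Real.pi))⁻¹ * Real.exp (-x ^ 2 / 2)

noncomputable def stdCdf (x : ℝ) : ℝ := ∫ u in Set.Iic x, stdPdf u

noncomputable def gPdf (μ σ x : ℝ) : ℝ :=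
  (σ * Real.sqrt (2 * Real.pi))⁻¹ * Real.exp (-(x - μ) ^ 2 / (2 * σ ^ 2))

lemma gPdf_eq (μ σ : ℝ) (hσ : 0 < σ) (x : ℝ) :
    gPdf μ σ x = ProbabilityTheory.gaussianPDFReal μ (⟨σ^2, sq_nonneg σ⟩ : NNReal) x := by
  unfold gPdf ProbabilityTheory.gaussianPDFReal
  have : Real.sqrt (2 * Real.pi * σ ^ 2) = σ * Real.sqrt (2 * Real.pi) := by
    rw [mul_comm (2 * Real.pi), Real.sqrt_mul (sq_nonneg σ), Real.sqrt_sq hσ.le]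
  change _ = (√(2 * π * σ ^ 2))⁻¹ * rexp (-(x - μ) ^ 2 / (2 * σ ^ 2))
  rw [this]

lemma stdPdf_eq_gPdf (x : ℝ) : stdPdf x = gPdf 0 1 x := by
  simp [stdPdf, gPdf]

lemma integrable_gPdf (μ σ : ℝ) (hσ : 0 < σ) : Integrable (gPdf μ σ) := by
  have := ProbabilityTheory.integrable_gaussianPDFReal μ (⟨σ^2, sq_nonneg σ⟩ : NNReal)
  exact this.congr (by filter_upwards with x using (gPdf_eq μ σ hσ x).symm)

lemma integral_gPdf (μ σ : ℝ) (hσ : 0 < σ) : ∫ x, gPdf μ σ x = 1 := by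
  have h : (⟨σ^2, sq_nonneg σ⟩ : NNReal) ≠ 0 := by
    intro h
    have := congrArg NNReal.toReal h
    change σ ^ 2 = 0 at this
    simp at this
    exact hσ.ne' this
  rw [show (fun x => gPdf μ σ x) = gPdf μ σ from rfl]
  have := ProbabilityTheory.integral_gaussianPDFReal_eq_one μ h
  rw [← this]
  exact integral_congr_ae (by filter_upwards with x using gPdf_eq μ σ hσ x)

lemma gPdf_nonneg (μ σ x : ℝ) (hσ : 0 < σ) : 0 ≤ gPdf μ σ x := by
  unfold gPdf; positivity

lemma continuous_gPdf (μ σ : ℝ) : Continuous (gPdf μ σ) := by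
  unfold gPdf; fun_prop

lemma stdPdf_nonneg (x : ℝ) : 0 ≤ stdPdf x := by unfold stdPdf; positivity
lemma stdPdf_pos (x : ℝ) : 0 < stdPdf x := by
  unfold stdPdf
  have := Real.pi_pos
  positivity
lemma continuous_stdPdf : Continuous stdPdf := by unfold stdPdf; fun_prop
lemma integrable_stdPdf : Integrable stdPdf := by
  exact (integrable_gPdf 0 1 one_pos).congr (by filter_upwards with x using (stdPdf_eq_gPdf x).symm)
lemma integral_stdPdf : ∫ x, stdPdf x = 1 := by
  rw [← integral_gPdf 0 1 one_pos]
  exact integral_congr_ae (by filter_upwards with x using stdPdf_eq_gPdf x)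

lemma stdPdf_even (x : ℝ) : stdPdf (-x) = stdPdf x := by simp [stdPdf]

lemma stdCdf_nonneg (x : ℝ) : 0 ≤ stdCdf x :=
  integral_nonneg_of_ae (by filter_upwards with u using stdPdf_nonneg u)

lemma stdCdf_le_one (x : ℝ) : stdCdf x ≤ 1 := by
  rw [← integral_stdPdf]
  exact setIntegral_le_integral integrable_stdPdf
    (by filter_upwards with u using stdPdf_nonneg u)

lemma stdCdf_pos (x : ℝ) : 0 < stdCdf x := by
  rw [stdCdf, (setIntegral_pos_iff_support_of_nonneg_ae
    (by filter_upwards with u using stdPdf_nonneg u) integrable_stdPdf.integrableOn)]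
  have : Function.support stdPdf = Set.univ := by
    ext u; simp [Function.mem_support, (stdPdf_pos u).ne']
  rw [this, Set.univ_inter]
  simp [Real.volume_Iic]

lemma monotone_stdCdf : Monotone stdCdf := fun a b hab =>
  setIntegral_mono_set integrable_stdPdf.integrableOn
    (by filter_upwards with u using stdPdf_nonneg u)
    (HasSubset.Subset.eventuallyLE (Set.Iic_subset_Iic.mpr hab))

lemma measurable_stdCdf : Measurable stdCdf := monotone_stdCdf.measurable

lemma hasDerivAt_stdCdf (x : ℝ) : HasDerivAt stdCdf (stdPdf x) x := by
  have key : ∀ t, stdCdf t = stdCdf 0 + ∫ u in (0:ℝ)..t, stdPdf u := by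
    intro t
    have := intervalIntegral.integral_Iic_sub_Iic (μ := volume) (f := stdPdf) (a := 0) (b := t)
      integrable_stdPdf.integrableOn integrable_stdPdf.integrableOn
    rw [stdCdf, stdCdf, ← this]
    ring
  have h1 : HasDerivAt (fun t => stdCdf 0 + ∫ u in (0:ℝ)..t, stdPdf u) (stdPdf x) x := by
    apply HasDerivAt.const_add
    exact intervalIntegral.integral_hasDerivAt_right
      integrable_stdPdf.intervalIntegrable
      (continuous_stdPdf.stronglyMeasurableAtFilter _ _)
      continuous_stdPdf.continuousAt
  exact h1.congr_of_eventuallyEq (by filter_upwards with t using key t)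

lemma integral_Iic_comp_add (f : ℝ → ℝ) (a c : ℝ) :
    ∫ u in Iic a, f u = ∫ t in Iic (a - c), f (t + c) := by
  rw [← integral_indicator measurableSet_Iic, ← integral_indicator measurableSet_Iic]
  have : ∀ t, (Iic (a - c)).indicator (fun t => f (t + c)) t
      = (Iic a).indicator f (t + c) := by
    intro t
    simp only [indicator_apply, mem_Iic]
    by_cases h : t ≤ a - c
    · rw [if_pos h, if_pos (by linarith)]
    · rw [if_neg h, if_neg (by intro h'; exact h (by linarith))]
  simp_rw [this]
  exact (integral_add_right_eq_self ((Iic a).indicator f) c).symm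

lemma integral_Iic_comp_affine (f : ℝ → ℝ) (a m : ℝ) {b : ℝ} (hb : 0 < b) :
    ∫ t in Iic a, f ((t - m)/b) = b * ∫ u in Iic ((a - m)/b), f u := by
  rw [integral_Iic_comp_add (fun t => f ((t - m)/b)) a m]
  simp only [add_sub_cancel_right]
  rw [← integral_indicator measurableSet_Iic, ← integral_indicator measurableSet_Iic]
  have : ∀ t, (Iic (a - m)).indicator (fun t => f (t / b)) t
      = (Iic ((a - m)/b)).indicator f (b⁻¹ * t) := by
    intro t
    have hiff : b⁻¹ * t ≤ (a - m)/b ↔ t ≤ a - m := by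
      rw [inv_mul_eq_div]
      exact div_le_div_iff_of_pos_right hb
    simp only [indicator_apply, mem_Iic]
    by_cases h : t ≤ a - m
    · rw [if_pos h, if_pos (hiff.mpr h), inv_mul_eq_div]
    · rw [if_neg h, if_neg (fun h' => h (hiff.mp h'))]
  simp_rw [this]
  rw [Measure.integral_comp_mul_left ((Iic ((a - m)/b)).indicator f) b⁻¹]
  rw [inv_inv, abs_of_pos hb, smul_eq_mul]

lemma stdPdf_sq_eq {a b : ℝ} (h : a^2 = b^2) : stdPdf a = stdPdf b := by
  unfold stdPdf; rw [h]

lemma stdCdf_affine (a m : ℝ) {b : ℝ} (hb : 0 < b) :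
    ∫ t in Iic a, stdPdf ((t - m)/b) / b = stdCdf ((a - m)/b) := by
  have : ∀ t : ℝ, stdPdf ((t - m)/b) / b = b⁻¹ * stdPdf ((t - m)/b) := by
    intro t; ring
  simp_rw [this]
  rw [MeasureTheory.integral_const_mul, integral_Iic_comp_affine stdPdf a m hb, stdCdf]
  field_simp

lemma key_prod (μ σ : ℝ) (hσ : 0 < σ) (c x : ℝ) :
    stdPdf (x + c) * gPdf μ σ x
      = (stdPdf ((c + μ)/Real.sqrt (1+σ^2)) / Real.sqrt (1+σ^2)) *
        gPdf ((μ - σ^2*c)/(1+σ^2)) (σ / Real.sqrt (1+σ^2)) x := by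
  have h1 : (0:ℝ) < 1 + σ^2 := by positivity
  set s := Real.sqrt (1+σ^2) with hs_def
  have hs : 0 < s := Real.sqrt_pos.mpr h1
  have hs2 : s^2 = 1+σ^2 := Real.sq_sqrt h1.le
  have hq : (0:ℝ) < Real.sqrt (2*Real.pi) := Real.sqrt_pos.mpr (by have := Real.pi_pos; positivity)
  unfold stdPdf gPdf
  rw [show ((Real.sqrt (2*Real.pi))⁻¹ * Real.exp (-(x+c)^2/2)) *
      ((σ * Real.sqrt (2*Real.pi))⁻¹ * Real.exp (-(x-μ)^2/(2*σ^2)))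
    = ((Real.sqrt (2*Real.pi))⁻¹ * (σ * Real.sqrt (2*Real.pi))⁻¹) *
      Real.exp (-(x+c)^2/2 + -(x-μ)^2/(2*σ^2)) from by rw [Real.exp_add]; ring]
  rw [show ((Real.sqrt (2*Real.pi))⁻¹ * Real.exp (-((c+μ)/s)^2/2) / s) *
      ((σ/s * Real.sqrt (2*Real.pi))⁻¹ *
        Real.exp (-(x - (μ - σ^2*c)/(1+σ^2))^2/(2*(σ/s)^2)))
    = ((Real.sqrt (2*Real.pi))⁻¹ / s * (σ/s * Real.sqrt (2*Real.pi))⁻¹) *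
      Real.exp (-((c+μ)/s)^2/2 + -(x - (μ - σ^2*c)/(1+σ^2))^2/(2*(σ/s)^2)) from by
        rw [Real.exp_add]; ring]
  have hcoef : ((Real.sqrt (2*Real.pi))⁻¹ / s * (σ/s * Real.sqrt (2*Real.pi))⁻¹)
      = ((Real.sqrt (2*Real.pi))⁻¹ * (σ * Real.sqrt (2*Real.pi))⁻¹) := by
    field_simp
  have hexp : (-((c+μ)/s)^2/2 + -(x - (μ - σ^2*c)/(1+σ^2))^2/(2*(σ/s)^2))
      = (-(x+c)^2/2 + -(x-μ)^2/(2*σ^2)) := by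
    rw [div_pow, div_pow, hs2]
    field_simp
    ring
  rw [hcoef, hexp]

lemma integral_key (μ σ : ℝ) (hσ : 0 < σ) (c : ℝ) :
    ∫ x, stdPdf (x + c) * gPdf μ σ x
      = stdPdf ((c + μ)/Real.sqrt (1+σ^2)) / Real.sqrt (1+σ^2) := by
  have h1 : (0:ℝ) < 1 + σ^2 := by positivity
  have hs : 0 < Real.sqrt (1+σ^2) := Real.sqrt_pos.mpr h1
  simp_rw [key_prod μ σ hσ c]
  rw [MeasureTheory.integral_const_mul, integral_gPdf _ _ (div_pos hσ hs), mul_one]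

lemma integrable_key (μ σ : ℝ) (hσ : 0 < σ) (c : ℝ) :
    Integrable (fun x => stdPdf (x + c) * gPdf μ σ x) := by
  have h1 : (0:ℝ) < 1 + σ^2 := by positivity
  have hs : 0 < Real.sqrt (1+σ^2) := Real.sqrt_pos.mpr h1
  have := (integrable_gPdf ((μ - σ^2*c)/(1+σ^2)) (σ / Real.sqrt (1+σ^2))
    (div_pos hσ hs)).const_mul (stdPdf ((c + μ)/Real.sqrt (1+σ^2)) / Real.sqrt (1+σ^2))
  exact this.congr (by filter_upwards with x using (key_prod μ σ hσ c x).symm)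

lemma integrable_stdCdf_mul (y μ σ : ℝ) (hσ : 0 < σ) :
    Integrable (fun x => stdCdf (y*x) * gPdf μ σ x) := by
  apply (integrable_gPdf μ σ hσ).bdd_mul (c := 1)
  · exact (measurable_stdCdf.comp (measurable_const_mul y)).aestronglyMeasurable
  · refine Filter.Eventually.of_forall (fun x => ?_)
    rw [Real.norm_eq_abs, abs_of_nonneg (stdCdf_nonneg _)]
    exact stdCdf_le_one _

lemma intA (y μ σ : ℝ) (hy : y = -1 ∨ y = 1) (hσ : 0 < σ) :
    ∫ x, stdCdf (y*x) * gPdf μ σ x = stdCdf (y*μ/Real.sqrt (1+σ^2)) := by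
  have hysq : y^2 = 1 := by rcases hy with rfl | rfl <;> norm_num
  have h1 : (0:ℝ) < 1 + σ^2 := by positivity
  have hs : 0 < Real.sqrt (1+σ^2) := Real.sqrt_pos.mpr h1
  -- step 1 : write stdCdf (y*x) as an integral over Iic 0
  have step1 : ∀ x : ℝ, stdCdf (y*x) = ∫ t in Iic (0:ℝ), stdPdf (t + y*x) := by
    intro x
    rw [stdCdf, integral_Iic_comp_add stdPdf (y*x) (y*x), sub_self]
  have hF : ∀ x : ℝ, stdCdf (y*x) * gPdf μ σ x
      = ∫ t in Iic (0:ℝ), stdPdf (t + y*x) * gPdf μ σ x := by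
    intro x
    rw [step1 x, ← integral_mul_const]
  simp_rw [hF]
  -- Fubini
  have hmeas : AEStronglyMeasurable
      (Function.uncurry fun x t => stdPdf (t + y*x) * gPdf μ σ x)
      (volume.prod (volume.restrict (Iic (0:ℝ)))) := by
    apply Continuous.aestronglyMeasurable
    exact ((continuous_stdPdf.comp (continuous_snd.add
      (continuous_const.mul continuous_fst))).mul
      ((continuous_gPdf μ σ).comp continuous_fst))
  have hint : Integrable (Function.uncurry fun x t => stdPdf (t + y*x) * gPdf μ σ x)
      (volume.prod (volume.restrict (Iic (0:ℝ)))) := by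
    rw [integrable_prod_iff hmeas]
    constructor
    · filter_upwards with x
      simp only [Function.uncurry_apply_pair]
      have : Integrable (fun t => stdPdf (t + y*x)) volume := by
        apply (integrable_gPdf (-(y*x)) 1 one_pos).congr
        filter_upwards with t
        simp [stdPdf, gPdf, sub_neg_eq_add]
      exact this.integrableOn.mul_const _
    · have heq : (fun x => ∫ t in Iic (0:ℝ), ‖stdPdf (t + y*x) * gPdf μ σ x‖)
          = fun x => stdCdf (y*x) * gPdf μ σ x := by
        funext x
        rw [hF x]
        congr 1 with t
        rw [Real.norm_eq_abs, abs_of_nonneg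
          (mul_nonneg (stdPdf_nonneg _) (gPdf_nonneg μ σ x hσ))]
      simp only [Function.uncurry_apply_pair]
      rw [heq]
      exact integrable_stdCdf_mul y μ σ hσ
  rw [integral_integral_swap hint]
  -- inner integral
  have hinner : ∀ t : ℝ, (∫ x, stdPdf (t + y*x) * gPdf μ σ x)
      = stdPdf ((t - -(y*μ))/Real.sqrt (1+σ^2)) / Real.sqrt (1+σ^2) := by
    intro t
    have he : ∀ x : ℝ, stdPdf (t + y*x) = stdPdf (x + y*t) := by
      intro x
      exact stdPdf_sq_eq (by linear_combination (x^2 - t^2) * hysq)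
    simp_rw [he]
    rw [integral_key μ σ hσ (y*t)]
    have : stdPdf ((y*t + μ)/Real.sqrt (1+σ^2))
        = stdPdf ((t - -(y*μ))/Real.sqrt (1+σ^2)) := by
      apply stdPdf_sq_eq
      rw [div_pow, div_pow]
      congr 1
      linear_combination (t^2 - μ^2) * hysq
    rw [this]
  simp_rw [hinner]
  rw [stdCdf_affine 0 (-(y*μ)) hs]
  norm_num

lemma stdPdf_mul (y x : ℝ) (hy : y = -1 ∨ y = 1) : stdPdf (y*x) = stdPdf x := by
  rcases hy with rfl | rfl <;> [skip; simp] <;>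
    exact stdPdf_sq_eq (by ring)

lemma intB (y μ σ : ℝ) (hy : y = -1 ∨ y = 1) (hσ : 0 < σ) :
    ∫ x, stdPdf (y*x) * gPdf μ σ x
      = stdPdf (y*μ/Real.sqrt (1+σ^2)) / Real.sqrt (1+σ^2) := by
  have hysq : y^2 = 1 := by rcases hy with rfl | rfl <;> norm_num
  simp_rw [stdPdf_mul y _ hy]
  rw [show (∫ x, stdPdf x * gPdf μ σ x) = ∫ x, stdPdf (x + 0) * gPdf μ σ x from by
    congr 1; funext x; rw [add_zero]]
  rw [integral_key μ σ hσ 0, zero_add]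
  congr 1
  apply stdPdf_sq_eq
  rw [div_pow, div_pow]
  congr 1
  linear_combination (-2*μ^2 + μ^2) * hysq

lemma integrable_stdPdf_mul_gPdf (y μ σ : ℝ) (hy : y = -1 ∨ y = 1) (hσ : 0 < σ) :
    Integrable (fun x => stdPdf (y*x) * gPdf μ σ x) := by
  apply (integrable_key μ σ hσ 0).congr
  filter_upwards with x
  rw [add_zero, stdPdf_mul y x hy]

lemma hasDerivAt_gPdf (μ σ : ℝ) (hσ : 0 < σ) (x : ℝ) :
    HasDerivAt (fun x => gPdf μ σ x) (-(x - μ)/σ^2 * gPdf μ σ x) x := by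
  have hE : HasDerivAt (fun x : ℝ => -(x - μ)^2/(2*σ^2))
      (-(2*(x - μ))/(2*σ^2)) x := by
    have h1 : HasDerivAt (fun x : ℝ => (x - μ)^2) (2*(x-μ)) x := by
      simpa using ((hasDerivAt_id x).sub_const μ).fun_pow 2
    simpa using (h1.neg.div_const (2*σ^2))
  have := ((hE.exp).const_mul ((σ * Real.sqrt (2 * Real.pi))⁻¹))
  refine HasDerivAt.congr_deriv (f := fun x => gPdf μ σ x) this ?_
  unfold gPdf
  field_simp

lemma integrable_sub_mul_gPdf (μ σ : ℝ) (hσ : 0 < σ) :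
    Integrable (fun x => (x - μ) * gPdf μ σ x) := by
  have hb : (0:ℝ) < 1/(2*σ^2) := by positivity
  have hg : Integrable (fun t : ℝ => t * Real.exp (-(1/(2*σ^2)) * t^2)) :=
    integrable_mul_exp_neg_mul_sq hb
  have htr : Integrable ((fun t : ℝ => t * Real.exp (-(1/(2*σ^2)) * t^2)) ∘
      (fun x : ℝ => x - μ)) :=
    ((measurePreserving_sub_right volume μ).integrable_comp
      hg.aestronglyMeasurable).mpr hg
  apply (htr.const_mul ((σ * Real.sqrt (2 * Real.pi))⁻¹)).congr
  filter_upwards with x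
  simp only [Function.comp_apply]
  unfold gPdf
  rw [show -(x - μ)^2/(2*σ^2) = -(1/(2*σ^2)) * (x - μ)^2 from by field_simp]
  ring

lemma intM3 (y μ σ : ℝ) (hy : y = -1 ∨ y = 1) (hσ : 0 < σ) :
    ∫ x, stdCdf (y*x) * ((x - μ) * gPdf μ σ x)
      = σ^2 * y * (stdPdf (y*μ/Real.sqrt (1+σ^2)) / Real.sqrt (1+σ^2)) := by
  have hu : ∀ x : ℝ, HasDerivAt (fun x => stdCdf (y*x)) (stdPdf (y*x) * y) x := by
    intro x
    have h2 : HasDerivAt (fun x : ℝ => y * x) y x := by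
      simpa using (hasDerivAt_id x).const_mul y
    exact (hasDerivAt_stdCdf (y*x)).comp x h2
  have hv : ∀ x : ℝ, HasDerivAt (fun x => -σ^2 * gPdf μ σ x) ((x - μ) * gPdf μ σ x) x := by
    intro x
    have := (hasDerivAt_gPdf μ σ hσ x).const_mul (-σ^2)
    refine HasDerivAt.congr_deriv (f := fun x => -σ^2 * gPdf μ σ x) this ?_
    field_simp
  have huv' : Integrable ((fun x => stdCdf (y*x)) * (fun x => (x - μ) * gPdf μ σ x)) := by
    apply ((integrable_sub_mul_gPdf μ σ hσ).bdd_mul (c := 1)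
      (measurable_stdCdf.comp (measurable_const_mul y)).aestronglyMeasurable ?_)
    refine Filter.Eventually.of_forall (fun x => ?_)
    simp only [Function.comp_apply, Real.norm_eq_abs]
    rw [abs_of_nonneg (stdCdf_nonneg _)]
    exact stdCdf_le_one _
  have hu'v : Integrable ((fun x => stdPdf (y*x) * y) * (fun x => -σ^2 * gPdf μ σ x)) := by
    apply ((integrable_stdPdf_mul_gPdf y μ σ hy hσ).const_mul (y * -σ^2)).congr
    filter_upwards with x
    simp only [Pi.mul_apply]
    ring
  have huv : Integrable ((fun x => stdCdf (y*x)) * (fun x => -σ^2 * gPdf μ σ x)) := by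
    apply (((integrable_gPdf μ σ hσ).const_mul (-σ^2)).bdd_mul (c := 1)
      (measurable_stdCdf.comp (measurable_const_mul y)).aestronglyMeasurable ?_)
    refine Filter.Eventually.of_forall (fun x => ?_)
    simp only [Function.comp_apply, Real.norm_eq_abs]
    rw [abs_of_nonneg (stdCdf_nonneg _)]
    exact stdCdf_le_one _
  have key := integral_mul_deriv_eq_deriv_mul_of_integrable (fun x _ => hu x) (fun x _ => hv x) huv' hu'v huv
  rw [show (∫ x, stdCdf (y*x) * ((x - μ) * gPdf μ σ x))
      = ∫ x, (fun x => stdCdf (y*x)) x * (fun x => (x - μ) * gPdf μ σ x) x from rfl]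
  rw [key]
  rw [show (∫ x, (fun x => stdPdf (y*x) * y) x * (fun x => -σ^2 * gPdf μ σ x) x)
      = ∫ x, (y * -σ^2) * (stdPdf (y*x) * gPdf μ σ x) from by congr 1; funext x; ring]
  rw [MeasureTheory.integral_const_mul, intB y μ σ hy hσ]
  ring

/-- First moment of the probit-tilted Gaussian density
`p(x) = η⁻¹ Φ(y x) φ(x; μ, σ²)` equals `μ + y σ² φ(z)/(η √(1+σ²))`
with `z = yμ/√(1+σ²)`, `η = Φ(z)`. -/
theorem stmt2 (y μ σ : ℝ) (hy : y = -1 ∨ y = 1) (hσ : 0 < σ) :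
    (∫ x : ℝ, x * ((stdCdf (y * μ / Real.sqrt (1 + σ ^ 2)))⁻¹ *
        stdCdf (y * x) * gPdf μ σ x)) =
      μ + y * σ ^ 2 * stdPdf (y * μ / Real.sqrt (1 + σ ^ 2)) /
        (stdCdf (y * μ / Real.sqrt (1 + σ ^ 2)) * Real.sqrt (1 + σ ^ 2)) := by
  have h1 : (0:ℝ) < 1 + σ^2 := by positivity
  have hs : 0 < Real.sqrt (1+σ^2) := Real.sqrt_pos.mpr h1
  have hη : 0 < stdCdf (y * μ / Real.sqrt (1 + σ ^ 2)) := stdCdf_pos _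
  have hkey : ∀ x : ℝ, x * ((stdCdf (y * μ / Real.sqrt (1 + σ ^ 2)))⁻¹ *
        stdCdf (y * x) * gPdf μ σ x)
      = (stdCdf (y * μ / Real.sqrt (1 + σ ^ 2)))⁻¹ *
        (stdCdf (y*x) * ((x - μ) * gPdf μ σ x) + μ * (stdCdf (y*x) * gPdf μ σ x)) := by
    intro x; ring
  simp_rw [hkey]
  rw [MeasureTheory.integral_const_mul]
  have hint1 : Integrable (fun x => stdCdf (y*x) * ((x - μ) * gPdf μ σ x)) := by
    apply ((integrable_sub_mul_gPdf μ σ hσ).bdd_mul (c := 1)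
      (measurable_stdCdf.comp (measurable_const_mul y)).aestronglyMeasurable ?_)
    refine Filter.Eventually.of_forall (fun x => ?_)
    simp only [Function.comp_apply, Real.norm_eq_abs]
    rw [abs_of_nonneg (stdCdf_nonneg _)]
    exact stdCdf_le_one _
  rw [integral_add hint1 ((integrable_stdCdf_mul y μ σ hσ).const_mul μ)]
  rw [intM3 y μ σ hy hσ, MeasureTheory.integral_const_mul, intA y μ σ hy hσ]
  field_simp
  ring
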